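/- Let R be a root system with Weyl group W and basis Π, and P, Q ⊆ Π with W(P,Q) = {w ∈ W : w(P) = Q} nonempty. If ν ∈ a_Q^{--} (a strictly negative combination of coroots of Q), ν' ∈ a_P^{--}, w ∈ W with w(Q) ⊂ R^+ and w(ν) = ν', and |P| = |Q|, then w(Q) ⊆ R_P^+ and in fact w(Q) = P, i.e. w ∈ W(Q,P). -/

import Mathlib

/-!
STATEMENT 19: Let P, Q ⊆ Π with W(P,Q) = {w : w(P) = Q} nonempty.  If
ν ∈ a_Q^{--} (a strictly negative combination of the coroots of Q),
ν' ∈ a_P^{--}, w ∈ W with w(Q) ⊂ R⁺, w(ν) = ν' and |P| = |Q|, then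
w(Q) ⊆ R_P^+ and in fact w(Q) = P, i.e. w ∈ W(Q,P).
-/

open scoped RealInnerProductSpace

noncomputable section

variable {E : Type*} [NormedAddCommGroup E] [InnerProductSpace ℝ E] [FiniteDimensional ℝ E]

/-- The coroot `α^∨ = 2α/⟨α,α⟩`. -/
def coroot (α : E) : E := (2 / ⟪α, α⟫) • α

/-- The positive roots of the subsystem with basis `B` inside `R`. -/
def posRootsOf (R B : Finset E) : Set E :=
  {β | β ∈ R ∧ ∃ c : E → ℝ, (∀ α, 0 ≤ c α) ∧ β = ∑ α ∈ B, c α • α}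

/-! The coordinates of `w ν = ν'` in the basis `Π` outside `P` vanish, and each is a sum of
nonpositive terms `cQ β · c_β(α)`, where `c_β` are the nonnegative coordinates of `w β`; so every
`w β` lies in the face of the cone `ℝ≥0 Π` spanned by `P`. The independent vectors `w(Q)` then
span `span P` by counting dimensions, so for `α ∈ P` the root `w⁻¹ α` lies in `span Q`, hence is
a nonnegative or a nonpositive combination of `Q`. Applying `w` writes `α` or `-α` as a
nonnegative combination of `w(Q)`; `-α` is impossible, and since `α` spans an extreme ray of the
cone some `w β` is a positive multiple of `α`, hence equal to `α` as `R` is reduced.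
Here `w⁻¹ α` is a root because the generators of `W` map the finite set `R` into itself, hence
onto itself. -/

section NonnegSpan

variable {𝕜 M : Type*} [Ring 𝕜] [AddCommGroup M] [Module 𝕜 M] {B P : Finset M}

lemma sum_smul_sum_smul {ι : Type*} (I : Finset ι) (B : Finset M) (a : ι → 𝕜)
    (c : ι → M → 𝕜) :
    ∑ i ∈ I, a i • ∑ α ∈ B, c i α • α = ∑ α ∈ B, (∑ i ∈ I, a i * c i α) • α := by
  simp_rw [Finset.smul_sum, smul_smul, Finset.sum_smul]
  exact Finset.sum_comm

namespace LinearIndepOn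

variable (hB : LinearIndepOn 𝕜 id (B : Set M))
include hB

lemma coeff_eq_of_sum_eq {f g : M → 𝕜} (h : ∑ α ∈ B, f α • α = ∑ α ∈ B, g α • α) :
    ∀ α ∈ B, f α = g α := by
  have hsub : ∑ α ∈ B, (f α - g α) • α = 0 := by
    simp only [sub_smul, Finset.sum_sub_distrib, h, sub_self]
  exact fun α hα => sub_eq_zero.1 (linearIndepOn_iff'.1 hB B _ subset_rfl hsub α hα)

lemma coeff_of_sum_eq_self {c : M → 𝕜} {α : M} (hα : α ∈ B) (h : ∑ α' ∈ B, c α' • α' = α) :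
    c α = 1 ∧ ∀ α' ∈ B, α' ≠ α → c α' = 0 := by
  classical
  have hc := hB.coeff_eq_of_sum_eq (g := fun α' => if α' = α then 1 else 0) <| h.trans <| by
    simp only [ite_smul, one_smul, zero_smul, Finset.sum_ite_eq', hα, if_true]
  exact ⟨by simpa using hc α hα, fun α' hα' hne => by simpa [hne] using hc α' hα'⟩

lemma coeff_eq_zero_of_sum_mem_span (hP : P ⊆ B) {c : M → 𝕜}
    (h : ∑ α ∈ B, c α • α ∈ Submodule.span 𝕜 (P : Set M)) : ∀ α ∈ B, α ∉ P → c α = 0 := by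
  classical
  obtain ⟨g, -, hg⟩ := Submodule.mem_span_finset.1 h
  have hgB : ∑ α ∈ B, (if α ∈ P then g α else 0) • α = ∑ α ∈ B, c α • α := by
    rw [← hg, ← Finset.sum_subset hP fun α _ hα => by rw [if_neg hα, zero_smul]]
    exact Finset.sum_congr rfl fun α hα => by rw [if_pos hα]
  intro α hα hαP
  rw [← hB.coeff_eq_of_sum_eq hgB α hα, if_neg hαP]

end LinearIndepOn

variable (𝕜) in
/-- `posRootsOf R B` unfolds to `R ∩ nonnegSpan ℝ B`. -/
def nonnegSpan [PartialOrder 𝕜] (B : Finset M) : Set M :=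
  {x | ∃ c : M → 𝕜, (∀ α, 0 ≤ c α) ∧ x = ∑ α ∈ B, c α • α}

section PartialOrder

variable [PartialOrder 𝕜]

lemma nonnegSpan_subset_span : nonnegSpan 𝕜 B ⊆ Submodule.span 𝕜 (B : Set M) := by
  rintro _ ⟨c, -, rfl⟩
  exact Submodule.sum_mem _ fun α hα => Submodule.smul_mem _ _ (Submodule.subset_span hα)

lemma sum_mem_nonnegSpan_of_coeff_eq_zero (hP : P ⊆ B) {c : M → 𝕜} (hc : ∀ α, 0 ≤ c α)
    (hcP : ∀ α ∈ B, α ∉ P → c α = 0) : ∑ α ∈ B, c α • α ∈ nonnegSpan 𝕜 P :=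
  ⟨c, hc, (Finset.sum_subset hP fun α hα hαP => by rw [hcP α hα hαP, zero_smul]).symm⟩

lemma LinearIndepOn.mem_nonnegSpan_of_mem_span (hB : LinearIndepOn 𝕜 id (B : Set M))
    (hP : P ⊆ B) {x : M} (hx : x ∈ nonnegSpan 𝕜 B) (hxP : x ∈ Submodule.span 𝕜 (P : Set M)) :
    x ∈ nonnegSpan 𝕜 P := by
  obtain ⟨c, hc, rfl⟩ := hx
  exact sum_mem_nonnegSpan_of_coeff_eq_zero hP hc (hB.coeff_eq_zero_of_sum_mem_span hP hxP)

lemma sum_smul_mem_nonnegSpan [IsOrderedRing 𝕜] {ι : Type*} {I : Finset ι} {a : ι → 𝕜}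
    {x : ι → M} (ha : ∀ i ∈ I, 0 ≤ a i) (hx : ∀ i ∈ I, x i ∈ nonnegSpan 𝕜 B) :
    ∑ i ∈ I, a i • x i ∈ nonnegSpan 𝕜 B := by
  choose! c hc hxc using hx
  refine ⟨fun α => ∑ i ∈ I, a i * c i α, fun α => Finset.sum_nonneg fun i hi =>
    mul_nonneg (ha i hi) (hc i hi α), ?_⟩
  rw [Finset.sum_congr rfl fun i hi => by rw [hxc i hi], sum_smul_sum_smul]

end PartialOrder

namespace LinearIndepOn

variable [LinearOrder 𝕜] [IsStrictOrderedRing 𝕜] (hB : LinearIndepOn 𝕜 id (B : Set M))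
include hB

/-- `nonnegSpan 𝕜 P` is a face of the cone `nonnegSpan 𝕜 B`. -/
lemma mem_nonnegSpan_of_sum_smul_mem_span (hP : P ⊆ B) {ι : Type*} {I : Finset ι}
    {a : ι → 𝕜} {x : ι → M} (ha : ∀ i ∈ I, 0 < a i) (hx : ∀ i ∈ I, x i ∈ nonnegSpan 𝕜 B)
    (h : ∑ i ∈ I, a i • x i ∈ Submodule.span 𝕜 (P : Set M)) :
    ∀ i ∈ I, x i ∈ nonnegSpan 𝕜 P := by
  choose! c hc hxc using hx
  rw [Finset.sum_congr rfl fun i hi => by rw [hxc i hi], sum_smul_sum_smul] at h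
  intro i hi
  rw [hxc i hi]
  refine sum_mem_nonnegSpan_of_coeff_eq_zero hP (hc i hi) fun α hα hαP => ?_
  have hsum := hB.coeff_eq_zero_of_sum_mem_span hP h α hα hαP
  have hterm := (Finset.sum_eq_zero_iff_of_nonneg fun j hj =>
    mul_nonneg (ha j hj).le (hc j hj α)).1 hsum i hi
  exact (mul_eq_zero.1 hterm).resolve_left (ha i hi).ne'

lemma neg_notMem_nonnegSpan {α : M} (hα : α ∈ B) : -α ∉ nonnegSpan 𝕜 B := by
  rintro ⟨c, hc, hneg⟩
  have h : ∑ α' ∈ B, (-c α') • α' = α := by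
    simp only [neg_smul, Finset.sum_neg_distrib, ← hneg, neg_neg]
  have hcα : c α = -1 := by rw [← (hB.coeff_of_sum_eq_self hα h).1, neg_neg]
  exact (hc α).not_gt (hcα ▸ neg_one_lt_zero)

/-- The members of `B` span extreme rays of the cone `nonnegSpan 𝕜 B`. -/
lemma exists_eq_smul_of_sum_smul_eq {α : M} (hα : α ∈ B) {ι : Type*} {I : Finset ι}
    {a : ι → 𝕜} {x : ι → M} (ha : ∀ i ∈ I, 0 ≤ a i) (hx : ∀ i ∈ I, x i ∈ nonnegSpan 𝕜 B)
    (h : ∑ i ∈ I, a i • x i = α) : ∃ i ∈ I, ∃ t : 𝕜, 0 < t ∧ x i = t • α := by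
  choose! c hc hxc using hx
  rw [Finset.sum_congr rfl fun i hi => by rw [hxc i hi], sum_smul_sum_smul] at h
  obtain ⟨hcα, hcother⟩ := hB.coeff_of_sum_eq_self hα h
  have hterm : ∀ α', ∀ i ∈ I, 0 ≤ a i * c i α' := fun α' i hi =>
    mul_nonneg (ha i hi) (hc i hi α')
  obtain ⟨i, hi, hne⟩ : ∃ i ∈ I, a i * c i α ≠ 0 :=
    Finset.exists_ne_zero_of_sum_ne_zero (hcα ▸ one_ne_zero)
  have hother : ∀ α' ∈ B, α' ≠ α → c i α' = 0 := fun α' hα' hne' =>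
    (mul_eq_zero.1 ((Finset.sum_eq_zero_iff_of_nonneg (hterm α')).1
      (hcother α' hα' hne') i hi)).resolve_left (left_ne_zero_of_mul hne)
  refine ⟨i, hi, c i α, (hc i hi α).lt_of_ne (right_ne_zero_of_mul hne).symm, ?_⟩
  rw [hxc i hi, Finset.sum_eq_single_of_mem α hα fun α' hα' hne' => by
    rw [hother α' hα' hne', zero_smul]]

lemma exists_map_eq_smul_of_symm_mem_span {Q : Finset M} (hQ : Q ⊆ B) (f : M ≃ₗ[𝕜] M)
    (hf : ∀ β ∈ Q, f β ∈ nonnegSpan 𝕜 B) {α : M} (hα : α ∈ B)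
    (hsign : f.symm α ∈ nonnegSpan 𝕜 B ∨ -f.symm α ∈ nonnegSpan 𝕜 B)
    (hspan : f.symm α ∈ Submodule.span 𝕜 (Q : Set M)) :
    ∃ β ∈ Q, ∃ t : 𝕜, 0 < t ∧ f β = t • α := by
  rcases hsign with hpos | hneg
  · obtain ⟨e, he, heq⟩ := hB.mem_nonnegSpan_of_mem_span hQ hpos hspan
    refine hB.exists_eq_smul_of_sum_smul_eq hα (fun β _ => he β) hf ?_
    simp only [← map_smul, ← map_sum, ← heq, LinearEquiv.apply_symm_apply]
  · obtain ⟨e, he, heq⟩ := hB.mem_nonnegSpan_of_mem_span hQ hneg (neg_mem hspan)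
    have hsum : ∑ β ∈ Q, e β • f β = -α := by
      simp only [← map_smul, ← map_sum, ← heq, map_neg, LinearEquiv.apply_symm_apply]
    exact absurd (hsum ▸ sum_smul_mem_nonnegSpan (fun β _ => he β) hf)
      (hB.neg_notMem_nonnegSpan hα)

end LinearIndepOn

end NonnegSpan

open scoped Pointwise in
lemma MulAction.closure_le_stabilizer_set {G α : Type*} [Group G] [MulAction G α] {s : Set α}
    (hs : s.Finite) {S : Set G} (hS : ∀ g ∈ S, ∀ b ∈ s, g • b ∈ s) :
    Subgroup.closure S ≤ stabilizer G s :=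
  (Subgroup.closure_le _).2 fun g hg => (mem_stabilizer_set' hs).2 (hS g hg)

lemma Submodule.map_span_eq_span_of_card_eq {K M N : Type*} [DivisionRing K] [AddCommGroup M]
    [Module K M] [AddCommGroup N] [Module K N] (e : M ≃ₗ[K] N) {Q : Finset M} {P : Finset N}
    (hQ : LinearIndepOn K id (Q : Set M)) (hP : LinearIndepOn K id (P : Set N))
    (hcard : P.card = Q.card) (h : ∀ β ∈ Q, e β ∈ span K (P : Set N)) :
    (span K (Q : Set M)).map (e : M →ₗ[K] N) = span K (P : Set N) := by
  refine eq_of_le_of_finrank_eq (map_le_iff_le_comap.2 (span_le.2 h)) ?_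
  rw [LinearEquiv.finrank_map_eq, finrank_span_finset_eq_card hQ,
    finrank_span_finset_eq_card hP, hcard]

lemma LinearIndepOn.map_mem_nonnegSpan_of_map_sum_smul_coroot_mem_span {V : Type*}
    [NormedAddCommGroup V] [InnerProductSpace ℝ V] {B P Q : Finset V}
    (hB : LinearIndepOn ℝ id (B : Set V)) (hP : P ⊆ B) (hQ : Q ⊆ B) (f : V →ₗ[ℝ] V)
    (hf : ∀ β ∈ Q, f β ∈ nonnegSpan ℝ B) {c : V → ℝ} (hc : ∀ β ∈ Q, c β < 0)
    (h : f (∑ β ∈ Q, c β • coroot β) ∈ Submodule.span ℝ (P : Set V)) :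
    ∀ β ∈ Q, f β ∈ nonnegSpan ℝ P := by
  refine hB.mem_nonnegSpan_of_sum_smul_mem_span hP (a := fun β => -c β * (2 / ⟪β, β⟫))
    (fun β hβ => mul_pos (neg_pos.2 (hc β hβ)) (div_pos two_pos
      (real_inner_self_pos.2 (hB.ne_zero (hQ hβ))))) hf ?_
  have hsum : ∑ β ∈ Q, (-c β * (2 / ⟪β, β⟫)) • f β = -f (∑ β ∈ Q, c β • coroot β) := by
    simp only [coroot, map_sum, map_smul, smul_smul, neg_mul, neg_smul, Finset.sum_neg_distrib]
  rw [hsum]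
  exact neg_mem h

lemma sum_smul_coroot_mem_span {V : Type*} [NormedAddCommGroup V] [InnerProductSpace ℝ V]
    (P : Finset V) (c : V → ℝ) : ∑ α ∈ P, c α • coroot α ∈ Submodule.span ℝ (P : Set V) :=
  Submodule.sum_mem _ fun _ hα => Submodule.smul_mem _ _
    (Submodule.smul_mem _ _ (Submodule.subset_span hα))

theorem stmt19_general
    (R Pi : Finset E) (hPiR : ↑Pi ⊆ (R : Set E))
    (hred : ∀ β ∈ R, ∀ t : ℝ, t • β ∈ R → t = 1 ∨ t = -1)
    (hbasis : ∀ β ∈ R, (∃ c : E → ℝ, (∀ α, 0 ≤ c α) ∧ β = ∑ α ∈ Pi, c α • α) ∨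
                       (∃ c : E → ℝ, (∀ α, c α ≤ 0) ∧ β = ∑ α ∈ Pi, c α • α))
    (hindep : LinearIndependent ℝ (fun x : {x // x ∈ Pi} => (x : E)))
    (s : E → (E ≃ₗ[ℝ] E))
    (hsR : ∀ α ∈ Pi, ∀ β ∈ R, s α β ∈ R)
    (P Q : Finset E) (hP : P ⊆ Pi) (hQ : Q ⊆ Pi) (hcard : P.card = Q.card)
    (w : E ≃ₗ[ℝ] E) (hw : w ∈ Subgroup.closure (s '' ↑Pi))
    (nu nu' : E) (cQ cP : E → ℝ)
    (hcQ : ∀ β ∈ Q, cQ β < 0) (hnu : nu = ∑ β ∈ Q, cQ β • coroot β)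
    (hnu' : nu' = ∑ α ∈ P, cP α • coroot α)
    (hwQ : ∀ β ∈ Q, w β ∈ posRootsOf R Pi)
    (hwnu : w nu = nu') :
    (∀ β ∈ Q, w β ∈ posRootsOf R P) ∧ (fun x => w x) '' ↑Q = ↑P := by
  classical
  have hPi : LinearIndepOn ℝ id (Pi : Set E) := hindep
  have hwR : ∀ α ∈ R, w.symm α ∈ R := by
    have hstab := MulAction.closure_le_stabilizer_set R.finite_toSet
      (by rintro _ ⟨α, hα, rfl⟩ β hβ; exact hsR α hα β hβ) hw
    exact (MulAction.mem_stabilizer_set' R.finite_toSet).1 (inv_mem hstab)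
  have hwP : ∀ β ∈ Q, w β ∈ nonnegSpan ℝ P :=
    hPi.map_mem_nonnegSpan_of_map_sum_smul_coroot_mem_span hP hQ w
      (fun β hβ => (hwQ β hβ).2) hcQ
      (by rw [← hnu, LinearEquiv.coe_coe, hwnu, hnu']; exact sum_smul_coroot_mem_span P cP)
  refine ⟨fun β hβ => ⟨(hwQ β hβ).1, hwP β hβ⟩, ?_⟩
  have hspan := Submodule.map_span_eq_span_of_card_eq w (hPi.mono hQ) (hPi.mono hP) hcard
    fun β hβ => nonnegSpan_subset_span (hwP β hβ)
  have hsign : ∀ x ∈ R, x ∈ nonnegSpan ℝ Pi ∨ -x ∈ nonnegSpan ℝ Pi := by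
    refine fun x hx => (hbasis x hx).imp id fun ⟨c, hc, hxc⟩ => ⟨fun α => -c α,
      fun α => neg_nonneg.2 (hc α), by simp only [hxc, neg_smul, Finset.sum_neg_distrib]⟩
  have hPQ : P ⊆ Q.image w := by
    intro α hα
    have hαR : α ∈ R := hPiR (hP hα)
    obtain ⟨β, hβ, t, ht, hwβ⟩ := hPi.exists_map_eq_smul_of_symm_mem_span hQ w
      (fun β hβ => (hwQ β hβ).2) (hP hα) (hsign _ (hwR α hαR))
      (by rw [← Submodule.mem_map_equiv, hspan]; exact Submodule.subset_span hα)
    have ht1 : t = 1 := (hred α hαR t (hwβ ▸ (hwQ β hβ).1)).resolve_right (by linarith)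
    exact Finset.mem_image.2 ⟨β, hβ, by rw [hwβ, ht1, one_smul]⟩
  have hQP : Q.image w = P :=
    (Finset.eq_of_subset_of_card_le hPQ (Finset.card_image_le.trans hcard.ge)).symm
  exact_mod_cast hQP

theorem stmt19
    (R Pi : Finset E) (hPiR : ↑Pi ⊆ (R : Set E)) (h0 : (0 : E) ∉ R)
    (hred : ∀ β ∈ R, ∀ t : ℝ, t • β ∈ R → t = 1 ∨ t = -1)
    (hcrys : ∀ α ∈ R, ∀ β ∈ R, ∃ n : ℤ, ⟪β, coroot α⟫ = (n : ℝ))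
    (hbasis : ∀ β ∈ R, (∃ c : E → ℝ, (∀ α, 0 ≤ c α) ∧ β = ∑ α ∈ Pi, c α • α) ∨
                       (∃ c : E → ℝ, (∀ α, c α ≤ 0) ∧ β = ∑ α ∈ Pi, c α • α))
    (hindep : LinearIndependent ℝ (fun x : {x // x ∈ Pi} => (x : E)))
    (s : E → (E ≃ₗ[ℝ] E))
    (hs : ∀ α ∈ Pi, ∀ x : E, s α x = x - ⟪x, coroot α⟫ • α)
    (hsR : ∀ α ∈ Pi, ∀ β ∈ R, s α β ∈ R)
    (P Q : Finset E) (hP : P ⊆ Pi) (hQ : Q ⊆ Pi) (hcard : P.card = Q.card)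
    (w : E ≃ₗ[ℝ] E) (hw : w ∈ Subgroup.closure (s '' ↑Pi))
    (nu nu' : E) (cQ cP : E → ℝ)
    (hcQ : ∀ β ∈ Q, cQ β < 0) (hnu : nu = ∑ β ∈ Q, cQ β • coroot β)
    (hcP : ∀ α ∈ P, cP α < 0) (hnu' : nu' = ∑ α ∈ P, cP α • coroot α)
    (hwQ : ∀ β ∈ Q, w β ∈ posRootsOf R Pi)
    (hwnu : w nu = nu') :
    (∀ β ∈ Q, w β ∈ posRootsOf R P) ∧ (fun x => w x) '' ↑Q = ↑P :=
  stmt19_general R Pi hPiR hred hbasis hindep s hsR P Q hP hQ hcard w hw nu nu' cQ cP hcQ hnu hnu'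
    hwQ hwnu

end
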